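/- Monotone gap: let E_best^t = min{E^1,…,E^t} where E^s = ‖B − f(X̄^s, A)‖₁ is the original objective value of the optimal aggregated solution X̄^s at iteration s, and let F^t be the optimal aggregated objective at iteration t. Under the aggregation assumption and refinement of partitions across iterations, the sequence F^t is nondecreasing, E_best^t is nonincreasing, and hence the gap E_best^t − F^t is nonincreasing in t and always nonnegative. -/

import Mathlib

open Finset

/-- Aggregated data matrix of `A` for the partition `P`. -/
noncomputable def aggMat {n m : ℕ} (P : Finpartition (Finset.univ : Finset (Fin n)))
    (A : Matrix (Fin n) (Fin m) ℝ) : Matrix {S // S ∈ P.parts} (Fin m) ℝ :=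
  fun S j => (∑ i ∈ S.1, A i j) / (S.1.card : ℝ)

/-- Weighted aggregated L1 objective for partition `P` and parameter `X`. -/
noncomputable def aggObj {n m q : ℕ}
    (f : Matrix (Fin m) (Fin q) ℝ → ∀ {ι : Type} [Fintype ι],
      Matrix ι (Fin m) ℝ → Matrix ι (Fin q) ℝ)
    (B : Matrix (Fin n) (Fin q) ℝ) (A : Matrix (Fin n) (Fin m) ℝ)
    (P : Finpartition (Finset.univ : Finset (Fin n)))
    (X : Matrix (Fin m) (Fin q) ℝ) : ℝ :=
  ∑ S : {S // S ∈ P.parts}, (S.1.card : ℝ) *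
    ∑ j, |aggMat P B S j - f X (aggMat P A) S j|

/-! Since `f` is equivariant under left multiplication, it commutes with taking cluster means,
so the aggregated objective of `X` is `∑_S ∑_j |∑_{i ∈ S} (B - f(X, A))_{ij}|`, the L1 norm
of the residual summed over each cluster. By the triangle inequality this can only grow when
the partition is refined, and it never exceeds the original objective `‖B - f(X, A)‖₁`.
Comparing with `X̄^{t+1}` at level `t` gives `F^t ≤ F^{t+1}`, comparing with `X̄^s` gives
`F^t ≤ E^s`, and `E_best` is a running minimum. -/

namespace Finpartition

variable {α G : Type*} [DecidableEq α] {s : Finset α}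

theorem sum_sum_parts {M : Type*} [AddCommMonoid M] (P : Finpartition s) (g : α → M) :
    ∑ S ∈ P.parts, ∑ i ∈ S, g i = ∑ i ∈ s, g i :=
  (sum_biUnion P.disjoint).symm.trans (congrArg (∑ i ∈ ·, g i) P.biUnion_parts)

variable [AddCommGroup G] [LinearOrder G] [IsOrderedAddMonoid G]

theorem sum_abs_sum_parts_le (P : Finpartition s) (g : α → G) :
    ∑ S ∈ P.parts, |∑ i ∈ S, g i| ≤ ∑ i ∈ s, |g i| := by
  rw [← P.sum_sum_parts]
  exact sum_le_sum fun S _ => abs_sum_le_sum_abs g S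

theorem sum_abs_sum_inter_parts {P : Finpartition s} {T S₀ : Finset α} (hS₀ : S₀ ∈ P.parts)
    (hT : T ⊆ S₀) (g : α → G) :
    ∑ S ∈ P.parts, |∑ i ∈ T ∩ S, g i| = |∑ i ∈ T, g i| := by
  rw [sum_eq_single_of_mem S₀ hS₀ fun S hS hne => ?_, inter_eq_left.2 hT]
  have hdisj : Disjoint T S := (P.disjoint hS hS₀ hne).symm.mono_left hT
  rw [disjoint_iff_inter_eq_empty.1 hdisj, sum_empty, abs_zero]

theorem sum_abs_sum_parts_le_of_le {P Q : Finpartition s} (h : Q ≤ P) (g : α → G) :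
    ∑ S ∈ P.parts, |∑ i ∈ S, g i| ≤ ∑ T ∈ Q.parts, |∑ i ∈ T, g i| := by
  have split (S : Finset α) (hS : S ∈ P.parts) :
      ∑ i ∈ S, g i = ∑ T ∈ Q.parts, ∑ i ∈ T ∩ S, g i := by
    simp_rw [← sum_ite_mem, Q.sum_sum_parts, sum_ite_mem, inter_eq_right.2 (P.le hS)]
  calc ∑ S ∈ P.parts, |∑ i ∈ S, g i|
      ≤ ∑ S ∈ P.parts, ∑ T ∈ Q.parts, |∑ i ∈ T ∩ S, g i| :=
        sum_le_sum fun S hS => split S hS ▸ abs_sum_le_sum_abs _ _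
    _ = ∑ T ∈ Q.parts, ∑ S ∈ P.parts, |∑ i ∈ T ∩ S, g i| := sum_comm
    _ = ∑ T ∈ Q.parts, |∑ i ∈ T, g i| := sum_congr rfl fun T hT => by
        obtain ⟨S₀, hS₀, hTS₀⟩ := h hT
        exact sum_abs_sum_inter_parts hS₀ hTS₀ g

end Finpartition

section Aggregation

variable {n m q : ℕ}

noncomputable def clusterMean (P : Finpartition (univ : Finset (Fin n))) :
    Matrix {S // S ∈ P.parts} (Fin n) ℝ :=
  fun S i => if i ∈ S.1 then (#S.1 : ℝ)⁻¹ else 0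

theorem aggMat_eq_clusterMean_mul (P : Finpartition (univ : Finset (Fin n))) {k : ℕ}
    (M : Matrix (Fin n) (Fin k) ℝ) : aggMat P M = clusterMean P * M := by
  ext S j
  simp only [aggMat, clusterMean, Matrix.mul_apply, ite_mul, zero_mul, sum_ite_mem, univ_inter,
    mul_sum, div_eq_inv_mul]

theorem card_mul_abs_aggMat (P : Finpartition (univ : Finset (Fin n))) {k : ℕ}
    (M : Matrix (Fin n) (Fin k) ℝ) (S : {S // S ∈ P.parts}) (j : Fin k) :
    (#S.1 : ℝ) * |aggMat P M S j| = |∑ i ∈ S.1, M i j| := by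
  have hcard : (0 : ℝ) < #S.1 := by exact_mod_cast (P.nonempty_of_mem_parts S.2).card_pos
  rw [aggMat, abs_div, abs_of_pos hcard, mul_div_cancel₀ _ hcard.ne']

variable (f : Matrix (Fin m) (Fin q) ℝ → ∀ {ι : Type} [Fintype ι],
      Matrix ι (Fin m) ℝ → Matrix ι (Fin q) ℝ)
    (B : Matrix (Fin n) (Fin q) ℝ) (A : Matrix (Fin n) (Fin m) ℝ)

def LeftMulEquivariant : Prop :=
  ∀ {ι κ : Type} [Fintype ι] [Fintype κ]
    (X : Matrix (Fin m) (Fin q) ℝ) (W : Matrix κ ι ℝ) (A : Matrix ι (Fin m) ℝ),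
    f X (W * A) = W * f X A

variable {f}

theorem aggObj_eq_sum_abs_sum (hf : LeftMulEquivariant f)
    (P : Finpartition (univ : Finset (Fin n))) (X : Matrix (Fin m) (Fin q) ℝ) :
    aggObj f B A P X = ∑ j, ∑ S ∈ P.parts, |∑ i ∈ S, (B - f X A) i j| := by
  have hres : aggMat P B - f X (aggMat P A) = aggMat P (B - f X A) := by
    simp only [aggMat_eq_clusterMean_mul, hf X, Matrix.mul_sub]
  rw [aggObj, sum_comm, ← sum_coe_sort P.parts]
  refine sum_congr rfl fun S _ => ?_
  simp only [mul_sum, ← Matrix.sub_apply, hres, card_mul_abs_aggMat]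

theorem aggObj_le_of_le (hf : LeftMulEquivariant f) {P Q : Finpartition (univ : Finset (Fin n))}
    (h : Q ≤ P) (X : Matrix (Fin m) (Fin q) ℝ) : aggObj f B A P X ≤ aggObj f B A Q X := by
  rw [aggObj_eq_sum_abs_sum B A hf, aggObj_eq_sum_abs_sum B A hf]
  exact sum_le_sum fun j _ => Finpartition.sum_abs_sum_parts_le_of_le h fun i => (B - f X A) i j

theorem aggObj_le_sum_abs (hf : LeftMulEquivariant f) (P : Finpartition (univ : Finset (Fin n)))
    (X : Matrix (Fin m) (Fin q) ℝ) : aggObj f B A P X ≤ ∑ i, ∑ j, |B i j - f X A i j| := by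
  rw [aggObj_eq_sum_abs_sum B A hf]
  exact (sum_le_sum fun j _ => P.sum_abs_sum_parts_le fun i => (B - f X A) i j).trans_eq sum_comm

end Aggregation

/-- Monotone gap of AID: the aggregated optimal values `F^t` are nondecreasing,
the best original objective values `E_best^t` are nonincreasing, and the gap
`E_best^t − F^t` is nonincreasing and nonnegative. -/
theorem stmt_12 {n m q : ℕ}
    (f : Matrix (Fin m) (Fin q) ℝ → ∀ {ι : Type} [Fintype ι],
      Matrix ι (Fin m) ℝ → Matrix ι (Fin q) ℝ)
    (hf : ∀ {ι κ : Type} [Fintype ι] [Fintype κ]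
      (X : Matrix (Fin m) (Fin q) ℝ) (W : Matrix κ ι ℝ) (A : Matrix ι (Fin m) ℝ),
      f X (W * A) = W * f X A)
    (B : Matrix (Fin n) (Fin q) ℝ) (A : Matrix (Fin n) (Fin m) ℝ)
    (Φ : Set (Matrix (Fin m) (Fin q) ℝ))
    (P : ℕ → Finpartition (Finset.univ : Finset (Fin n)))
    (Xb : ℕ → Matrix (Fin m) (Fin q) ℝ)
    (hXb : ∀ t, Xb t ∈ Φ ∧ ∀ Y ∈ Φ, aggObj f B A (P t) (Xb t) ≤ aggObj f B A (P t) Y)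
    (href : ∀ t, ∀ S ∈ (P (t + 1)).parts, ∃ S' ∈ (P t).parts, S ⊆ S')
    (E F Ebest : ℕ → ℝ)
    (hE : ∀ s, E s = ∑ i, ∑ j, |B i j - f (Xb s) A i j|)
    (hF : ∀ t, F t = aggObj f B A (P t) (Xb t))
    (hEbest : ∀ t, Ebest t = (Finset.range (t + 1)).inf' nonempty_range_add_one E) :
    (∀ t, F t ≤ F (t + 1)) ∧
    (∀ t, Ebest (t + 1) ≤ Ebest t) ∧
    (∀ t, Ebest (t + 1) - F (t + 1) ≤ Ebest t - F t) ∧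
    (∀ t, 0 ≤ Ebest t - F t) := by
  have hF_le_E : ∀ t s, F t ≤ E s := fun t s => by
    rw [hF, hE]
    exact ((hXb t).2 _ (hXb s).1).trans (aggObj_le_sum_abs B A hf _ _)
  have hF_mono : ∀ t, F t ≤ F (t + 1) := fun t => by
    rw [hF, hF]
    exact ((hXb t).2 _ (hXb (t + 1)).1).trans (aggObj_le_of_le B A hf (href t) _)
  have hEbest_anti : ∀ t, Ebest (t + 1) ≤ Ebest t := fun t => by
    rw [hEbest, hEbest]
    exact inf'_mono E (range_subset_range.2 (Nat.le_succ _)) _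
  have hgap_nonneg : ∀ t, 0 ≤ Ebest t - F t := fun t => by
    rw [sub_nonneg, hEbest]
    exact le_inf' _ _ fun s _ => hF_le_E t s
  exact ⟨hF_mono, hEbest_anti, fun t => sub_le_sub (hEbest_anti t) (hF_mono t), hgap_nonneg⟩
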